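/- For every positive integer n, y(n) ≠ 0, i.e., 2^{2n − 2z(n) − m(n) + 2} ≠ n^{m(n)−1}. -/

import Mathlib

/-!
Put `e = 2n - 2z(n) - m(n) + 2`. If `m(n) ≤ 1` then `n^{m(n)-1} = 1 < 2^e`. Otherwise
`2^e = n^{m(n)-1}` forces `n = 2^k` and `e = k (m(n) - 1)`. Since `z(n)` is within one of
`2n/3`, `3e + 3m(n)` lies in `[2n + 8, 2n + 12]`, i.e. `3(k+1) m(n) - 3k ≈ 2^{k+1}`. As
`m(n) ≈ 2^{(k+1)/2}`, the left side is far too small once `9(k+1)^2 ≤ 2^{k+1}`, i.e. `k ≥ 9`;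
the cases `k ≤ 8` are checked directly.
-/

lemma nine_mul_sq_le_two_pow {j : ℕ} (hj : 10 ≤ j) : 9 * j ^ 2 ≤ 2 ^ j := by
  induction j, hj using Nat.le_induction with
  | base => norm_num
  | succ j _ ih =>
    calc 9 * (j + 1) ^ 2 ≤ 2 * (9 * j ^ 2) := by nlinarith
      _ ≤ 2 * 2 ^ j := by omega
      _ = 2 ^ (j + 1) := (pow_succ' 2 j).symm

lemma Nat.Prime.exists_eq_pow_of_pow_eq_pow {p n e j : ℕ} (hp : p.Prime) (hj : j ≠ 0)
    (h : p ^ e = n ^ j) : ∃ k, n = p ^ k ∧ e = k * j := by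
  obtain ⟨k, -, rfl⟩ := (Nat.dvd_prime_pow hp).1 (h ▸ dvd_pow_self n hj)
  exact ⟨k, rfl, Nat.pow_right_injective hp.two_le (by simp only [h, pow_mul])⟩

section PowerOfTwo

variable {k M : ℕ}

lemma three_mul_mul_pred_add_le_two_pow (hk : 9 ≤ k) (hM : M ^ 2 ≤ 2 ^ (k + 1)) :
    3 * (k * (M - 1)) + 3 * M ≤ 2 ^ (k + 1) := by
  have hk9 : 9 * (k + 1) ^ 2 ≤ 2 ^ (k + 1) := nine_mul_sq_le_two_pow (by omega)
  have hprod : 3 * (k + 1) * M ≤ 2 ^ (k + 1) := by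
    refine (Nat.pow_le_pow_iff_left two_ne_zero).1 ?_
    calc (3 * (k + 1) * M) ^ 2 = 9 * (k + 1) ^ 2 * M ^ 2 := by ring
      _ ≤ 2 ^ (k + 1) * 2 ^ (k + 1) := Nat.mul_le_mul hk9 hM
      _ = (2 ^ (k + 1)) ^ 2 := by ring
  have hexpand : 3 * (k + 1) * M = 3 * (k * M) + 3 * M := by ring
  have : k * (M - 1) ≤ k * M := Nat.mul_le_mul_left k (Nat.sub_le M 1)
  omega

lemma three_mul_mul_pred_add_notMem_Icc_of_le_eight (hk : k ≤ 8) (hM : M ^ 2 ≤ 2 ^ (k + 1))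
    (hM' : 2 ^ (k + 1) < (M + 1) ^ 2) :
    3 * (k * (M - 1)) + 3 * M ∉ Set.Icc (2 ^ (k + 1) + 8) (2 ^ (k + 1) + 12) := by
  obtain rfl := Nat.eq_sqrt'.2 ⟨hM, hM'⟩
  revert k
  simp only [Set.mem_Icc]
  decide +kernel

end PowerOfTwo

theorem two_pow_ne_pow_pred {n M e : ℕ} (hM : M ^ 2 ≤ 2 * n) (hM' : 2 * n < (M + 1) ^ 2)
    (hlb : 2 * n + 8 ≤ 3 * e + 3 * M) (hub : 3 * e + 3 * M ≤ 2 * n + 12) :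
    2 ^ e ≠ n ^ (M - 1) := by
  intro h
  rcases le_or_gt M 1 with hM1 | hM2
  · rw [Nat.sub_eq_zero_of_le hM1, pow_zero, Nat.pow_eq_one] at h
    omega
  obtain ⟨k, rfl, rfl⟩ := Nat.prime_two.exists_eq_pow_of_pow_eq_pow (by omega) h
  rw [← pow_succ'] at hM hM' hlb hub
  rcases le_or_gt k 8 with hk | hk
  · exact three_mul_mul_pred_add_notMem_Icc_of_le_eight hk hM hM' ⟨hlb, hub⟩
  · have := three_mul_mul_pred_add_le_two_pow hk hM
    omega

theorem stmt_general
    (z : ℕ → ℤ) (m : ℕ → ℕ) (c : ℕ → ℤ) (y : ℕ → ℚ)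
    (hz : ∀ n : ℕ, 1 ≤ n → 3 * z n < 2 * (n : ℤ) ∧ ∀ w : ℤ, 3 * w < 2 * (n : ℤ) → w ≤ z n)
    (hm : ∀ n : ℕ, 1 ≤ n → (m n : ℤ) ^ 2 ≤ 2 * (n : ℤ) ∧ ∀ w : ℕ, (w : ℤ) ^ 2 ≤ 2 * (n : ℤ) → w ≤ m n)
    (hc : ∀ n : ℕ, c n = 2 * (n : ℤ) - 2 * z n + 2)
    (hy : ∀ n : ℕ, y n = (2 : ℚ) ^ (c n - (m n : ℤ)) - (n : ℚ) ^ ((m n : ℤ) - 1)) :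
    ∀ n : ℕ, 1 ≤ n → y n ≠ 0 := by
  intro n hn
  obtain ⟨hz_lt, hz_max⟩ := hz n hn
  obtain ⟨hm_sq, hm_max⟩ := hm n hn
  have hz_ge : 2 * (n : ℤ) ≤ 3 * z n + 3 := by
    by_contra
    have := hz_max (z n + 1) (by omega)
    omega
  have hm_pos : 1 ≤ m n := hm_max 1 (by push_cast; omega)
  have hm_lt : 2 * (n : ℤ) < (m n + 1) ^ 2 := by
    by_contra
    have := hm_max (m n + 1) (by push_cast; omega)
    omega
  have hcn := hc n
  obtain ⟨e, he⟩ : ∃ e : ℕ, c n - m n = e :=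
    Int.eq_ofNat_of_zero_le (by nlinarith [sq_nonneg ((m n : ℤ) - 2)])
  have hm_pred : (m n : ℤ) - 1 = (m n - 1 : ℕ) := by omega
  rw [hy, sub_ne_zero, he, hm_pred, zpow_natCast, zpow_natCast]
  exact_mod_cast two_pow_ne_pow_pred (by exact_mod_cast hm_sq) (by exact_mod_cast hm_lt)
    (by omega) (by omega)

theorem stmt
    (z : ℕ → ℤ) (m r : ℕ → ℕ) (c x : ℕ → ℤ) (y : ℕ → ℚ)
    (hz : ∀ n : ℕ, 1 ≤ n → 3 * z n < 2 * (n : ℤ) ∧ ∀ w : ℤ, 3 * w < 2 * (n : ℤ) → w ≤ z n)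
    (hm : ∀ n : ℕ, 1 ≤ n → (m n : ℤ) ^ 2 ≤ 2 * (n : ℤ) ∧ ∀ w : ℕ, (w : ℤ) ^ 2 ≤ 2 * (n : ℤ) → w ≤ m n)
    (hr : ∀ n : ℕ, 1 ≤ n → n ≤ 2 ^ r n ∧ ∀ s : ℕ, n ≤ 2 ^ s → r n ≤ s)
    (hc : ∀ n : ℕ, c n = 2 * (n : ℤ) - 2 * z n + 2)
    (hx : ∀ n : ℕ, x n = z n - ((r n : ℤ) + 1) * (m n : ℤ))
    (hy : ∀ n : ℕ, y n = (2 : ℚ) ^ (c n - (m n : ℤ)) - (n : ℚ) ^ ((m n : ℤ) - 1)) :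
    ∀ n : ℕ, 1 ≤ n → y n ≠ 0 :=
  stmt_general z m c y hz hm hc hy
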